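/- Let E₁, E₂ be independent standard exponential random variables and let ξ < 1. Define Z₁ = H_ξ(E₁) and Z₂ = H_ξ(E₁ + E₂), where H_ξ(x) = (x^{-ξ} - 1)/ξ for ξ ≠ 0 and H_ξ(x) = -log x for ξ = 0. Then E[Z₁ - Z₂] = Γ(1 - ξ), where Γ is the Gamma function. -/

import Mathlib

open MeasureTheory ProbabilityTheory Filter Set

noncomputable def Hxi (ξ x : ℝ) : ℝ := if ξ = 0 then -Real.log x else (x ^ (-ξ) - 1) / ξ

/-! For `0 < x ≤ y` we have `H_ξ x - H_ξ y = ∫_x^y t^(-ξ-1) dt`, so by Tonelli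
`E[Z₁ - Z₂] = ∫ t^(-ξ-1) P(E₁ < t < E₁ + E₂) dt`. Conditioning on `E₁`,
`P(E₁ < t < E₁ + E₂) = ∫_0^t e^(-x) e^(-(t-x)) dx = t e^(-t)`, and what is left is
`∫_0^∞ t^(-ξ) e^(-t) dt = Γ(1 - ξ)`. -/

open Real
open scoped ENNReal

lemma ae_pos_expMeasure {r : ℝ} (hr : 0 < r) : ∀ᵐ x ∂expMeasure r, 0 < x := by
  have := isProbabilityMeasure_expMeasure hr
  have hIic : expMeasure r (Iic 0) = 0 := by
    rw [← ofReal_cdf, cdf_expMeasure_eq hr, if_pos le_rfl, mul_zero, neg_zero, exp_zero, sub_self,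
      ENNReal.ofReal_zero]
  filter_upwards [measure_eq_zero_iff_ae_notMem.1 hIic] with x hx using not_le.1 hx

lemma expMeasure_Ioi {r a : ℝ} (hr : 0 < r) (ha : 0 ≤ a) :
    expMeasure r (Ioi a) = ENNReal.ofReal (exp (-(r * a))) := by
  have := isProbabilityMeasure_expMeasure hr
  rw [← compl_Iic, prob_compl_eq_one_sub measurableSet_Iic, ← ofReal_cdf, cdf_expMeasure_eq hr,
    if_pos ha, ← ENNReal.ofReal_one,
    ← ENNReal.ofReal_sub _ (sub_nonneg.2 (exp_le_one_iff.2 (by nlinarith))), _root_.sub_sub_cancel]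

lemma expMeasure_prod_lt_lt_add {r : ℝ} (hr : 0 < r) (t : ℝ) :
    (expMeasure r).prod (expMeasure r) {p | p.1 < t ∧ t < p.1 + p.2}
      = ENNReal.ofReal (r * t * exp (-(r * t))) := by
  have := isProbabilityMeasure_expMeasure hr
  have hS : MeasurableSet {p : ℝ × ℝ | p.1 < t ∧ t < p.1 + p.2} := by measurability
  have hslice : ∀ x, expMeasure r (Prod.mk x ⁻¹' {p | p.1 < t ∧ t < p.1 + p.2})
      = (Iio t).indicator (fun x ↦ ENNReal.ofReal (exp (-(r * (t - x))))) x := by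
    intro x
    by_cases hx : x < t
    · have : Prod.mk x ⁻¹' {p : ℝ × ℝ | p.1 < t ∧ t < p.1 + p.2} = Ioi (t - x) := by
        ext y; simp [hx, sub_lt_iff_lt_add']
      rw [this, expMeasure_Ioi hr (by linarith), indicator_of_mem (mem_Iio.2 hx)]
    · have : Prod.mk x ⁻¹' {p : ℝ × ℝ | p.1 < t ∧ t < p.1 + p.2} = ∅ := by
        ext y; simp [hx]
      rw [this, measure_empty, indicator_of_notMem (mt mem_Iio.1 hx)]
  have hdens : ∀ x, exponentialPDF r x * (Iio t).indicator
      (fun x ↦ ENNReal.ofReal (exp (-(r * (t - x))))) x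
      = (Ico 0 t).indicator (fun _ ↦ ENNReal.ofReal (r * exp (-(r * t)))) x := by
    intro x
    have hexp : exp (-(r * x)) * exp (-(r * (t - x))) = exp (-(r * t)) := by
      rw [← exp_add]; ring_nf
    by_cases hx0 : 0 ≤ x <;> by_cases hxt : x < t <;>
      simp [exponentialPDF_eq, hx0, hxt, ← ENNReal.ofReal_mul (mul_nonneg hr.le (exp_pos _).le),
        mul_assoc, hexp]
  rw [Measure.prod_apply hS]
  simp_rw [hslice]
  rw [show expMeasure r = volume.withDensity (exponentialPDF r) from rfl,
    lintegral_withDensity_eq_lintegral_mul (f := exponentialPDF r) _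
      (measurable_exponentialPDFReal r).ennreal_ofReal
      (by fun_prop (disch := exact measurableSet_Iio))]
  simp_rw [Pi.mul_apply, hdens]
  rw [lintegral_indicator_const measurableSet_Ico, Real.volume_Ico, sub_zero,
    ← ENNReal.ofReal_mul (mul_nonneg hr.le (exp_pos _).le), mul_right_comm]

@[fun_prop]
lemma measurable_Hxi (ξ : ℝ) : Measurable (Hxi ξ) := by
  unfold Hxi
  split_ifs <;> fun_prop

lemma hasDerivAt_Hxi (ξ : ℝ) {x : ℝ} (hx : 0 < x) : HasDerivAt (Hxi ξ) (-x ^ (-ξ - 1)) x := by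
  unfold Hxi
  split_ifs with hξ
  · subst hξ
    rw [neg_zero, zero_sub, Real.rpow_neg_one]
    exact (hasDerivAt_log hx.ne').neg
  · refine (((hasDerivAt_rpow_const (Or.inl hx.ne')).sub_const 1).div_const ξ).congr_deriv ?_
    rw [neg_mul, neg_div, mul_div_cancel_left₀ _ hξ]

lemma Hxi_sub_Hxi_eq_integral (ξ : ℝ) {x y : ℝ} (hx : 0 < x) (hxy : x ≤ y) :
    Hxi ξ x - Hxi ξ y = ∫ t in x..y, t ^ (-ξ - 1) := by
  have hpos : ∀ t ∈ uIcc x y, 0 < t := fun t ht ↦ hx.trans_le (uIcc_of_le hxy ▸ ht).1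
  rw [intervalIntegral.integral_eq_sub_of_hasDerivAt (f := -Hxi ξ)
    (fun t ht ↦ neg_neg (t ^ (-ξ - 1)) ▸ (hasDerivAt_Hxi ξ (hpos t ht)).neg)
    (intervalIntegral.intervalIntegrable_rpow (Or.inr (notMem_uIcc_of_lt hx (hx.trans_le hxy))))]
  simp only [Pi.neg_apply]
  ring

lemma Hxi_antitoneOn (ξ : ℝ) : AntitoneOn (Hxi ξ) (Ioi 0) := by
  intro x hx y _ hxy
  have : 0 ≤ ∫ t in x..y, t ^ (-ξ - 1) :=
    intervalIntegral.integral_nonneg hxy fun t ht ↦ rpow_nonneg (hx.le.trans ht.1) _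
  linarith [Hxi_sub_Hxi_eq_integral ξ hx hxy]

lemma ofReal_Hxi_sub_Hxi_eq_lintegral (ξ : ℝ) {x y : ℝ} (hx : 0 < x) (hxy : x ≤ y) :
    ENNReal.ofReal (Hxi ξ x - Hxi ξ y) = ∫⁻ t in Ioo x y, ENNReal.ofReal (t ^ (-ξ - 1)) := by
  rw [Hxi_sub_Hxi_eq_integral ξ hx hxy, intervalIntegral.integral_of_le hxy,
    integral_Ioc_eq_integral_Ioo, ofReal_integral_eq_lintegral_ofReal]
  · exact (intervalIntegral.intervalIntegrable_rpow
      (Or.inr (notMem_uIcc_of_lt hx (hx.trans_le hxy)))).1.mono_set Ioo_subset_Ioc_self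
  · exact (ae_restrict_iff' measurableSet_Ioo).2
      (ae_of_all _ fun t ht ↦ rpow_nonneg (hx.trans ht.1).le _)

lemma lintegral_setLIntegral_Ioo_eq_lintegral_mul {Ω : Type*} [MeasurableSpace Ω]
    (μ : Measure Ω) [SFinite μ] (ν : Measure ℝ) [SFinite ν] {X Y : Ω → ℝ}
    (hX : Measurable X) (hY : Measurable Y) {f : ℝ → ℝ≥0∞} (hf : Measurable f) :
    ∫⁻ ω, (∫⁻ t in Ioo (X ω) (Y ω), f t ∂ν) ∂μ = ∫⁻ t, f t * μ {ω | X ω < t ∧ t < Y ω} ∂ν := by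
  set S : Set (Ω × ℝ) := {p | X p.1 < p.2 ∧ p.2 < Y p.1}
  have hS : MeasurableSet S :=
    (measurableSet_lt (hX.comp measurable_fst) measurable_snd).inter
      (measurableSet_lt measurable_snd (hY.comp measurable_fst))
  calc ∫⁻ ω, (∫⁻ t in Ioo (X ω) (Y ω), f t ∂ν) ∂μ
      = ∫⁻ ω, (∫⁻ t, S.indicator (fun p ↦ f p.2) (ω, t) ∂ν) ∂μ := by
        simp_rw [← lintegral_indicator measurableSet_Ioo]; rfl
    _ = ∫⁻ t, (∫⁻ ω, S.indicator (fun p ↦ f p.2) (ω, t) ∂μ) ∂ν :=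
        lintegral_lintegral_swap ((hf.comp measurable_snd).indicator hS).aemeasurable
    _ = ∫⁻ t, f t * μ {ω | X ω < t ∧ t < Y ω} ∂ν := by
        refine lintegral_congr fun t ↦ lintegral_indicator_const ?_ (f t)
        exact (measurableSet_lt hX measurable_const).inter (measurableSet_lt measurable_const hY)

lemma lintegral_ofReal_rpow_mul_ofReal_mul_exp_neg {p : ℝ} (hp : -2 < p) :
    ∫⁻ t, ENNReal.ofReal (t ^ p) * ENNReal.ofReal (t * exp (-t))
      = ENNReal.ofReal (Gamma (p + 2)) := by
  have hs : 0 < p + 2 := by linarith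
  have hint : ∀ t, ENNReal.ofReal (t ^ p) * ENNReal.ofReal (t * exp (-t))
      = (Ioi 0).indicator (fun t ↦ ENNReal.ofReal (exp (-t) * t ^ (p + 2 - 1))) t := by
    intro t
    by_cases ht : 0 < t
    · rw [indicator_of_mem (mem_Ioi.2 ht), ← ENNReal.ofReal_mul (rpow_nonneg ht.le _),
        show p + 2 - 1 = p + 1 by ring, rpow_add_one ht.ne']
      ring_nf
    · rw [indicator_of_notMem (mt mem_Ioi.1 ht), ENNReal.ofReal_of_nonpos
        (mul_nonpos_of_nonpos_of_nonneg (not_lt.1 ht) (exp_pos _).le), mul_zero]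
  simp_rw [hint]
  rw [lintegral_indicator measurableSet_Ioi, Gamma_eq_integral hs,
    ofReal_integral_eq_lintegral_ofReal (GammaIntegral_convergent hs)]
  exact (ae_restrict_iff' measurableSet_Ioi).2 (ae_of_all _ fun t (ht : 0 < t) ↦ by positivity)

lemma ProbabilityTheory.IndepFun.measure_lt_lt_add {Ω : Type*} [MeasurableSpace Ω] {P : Measure Ω}
    [IsFiniteMeasure P] {X Y : Ω → ℝ} (hX : Measurable X) (hY : Measurable Y)
    (hXY : IndepFun X Y P) (t : ℝ) :
    P {ω | X ω < t ∧ t < X ω + Y ω} = (P.map X).prod (P.map Y) {p | p.1 < t ∧ t < p.1 + p.2} := by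
  have hS : MeasurableSet {p : ℝ × ℝ | p.1 < t ∧ t < p.1 + p.2} := by measurability
  rw [← hXY.map_prod_eq_prod_map_map hX.aemeasurable hY.aemeasurable,
    Measure.map_apply (hX.prodMk hY) hS]
  rfl

/-- If `E₁, E₂` are independent standard exponential random variables, `ξ < 1`,
`Z₁ = H_ξ(E₁)` and `Z₂ = H_ξ(E₁ + E₂)`, then `E[Z₁ - Z₂] = Γ(1 - ξ)`. -/
theorem expectation_Z1_sub_Z2 {Ω : Type*} [MeasurableSpace Ω]
    (P : Measure Ω) [IsProbabilityMeasure P]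
    (E1 E2 : Ω → ℝ) (hm1 : Measurable E1) (hm2 : Measurable E2)
    (hindep : IndepFun E1 E2 P)
    (h1 : P.map E1 = expMeasure 1) (h2 : P.map E2 = expMeasure 1)
    (ξ : ℝ) (hξ : ξ < 1) :
    ∫ ω, (Hxi ξ (E1 ω) - Hxi ξ (E1 ω + E2 ω)) ∂P = Real.Gamma (1 - ξ) := by
  have hpos : ∀ᵐ ω ∂P, 0 < E1 ω ∧ 0 < E2 ω :=
    (ae_of_ae_map hm1.aemeasurable (h1 ▸ ae_pos_expMeasure one_pos)).and
      (ae_of_ae_map hm2.aemeasurable (h2 ▸ ae_pos_expMeasure one_pos))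
  have hlayer : ∀ᵐ ω ∂P, ENNReal.ofReal (Hxi ξ (E1 ω) - Hxi ξ (E1 ω + E2 ω))
      = ∫⁻ t in Ioo (E1 ω) (E1 ω + E2 ω), ENNReal.ofReal (t ^ (-ξ - 1)) :=
    hpos.mono fun ω hω ↦ ofReal_Hxi_sub_Hxi_eq_lintegral ξ hω.1 (by linarith)
  have hprob : ∀ t, P {ω | E1 ω < t ∧ t < E1 ω + E2 ω} = ENNReal.ofReal (t * exp (-t)) := by
    intro t
    rw [hindep.measure_lt_lt_add hm1 hm2, h1, h2, expMeasure_prod_lt_lt_add one_pos, one_mul]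
  calc ∫ ω, (Hxi ξ (E1 ω) - Hxi ξ (E1 ω + E2 ω)) ∂P
      = (∫⁻ ω, ENNReal.ofReal (Hxi ξ (E1 ω) - Hxi ξ (E1 ω + E2 ω)) ∂P).toReal :=
        integral_eq_lintegral_of_nonneg_ae (hpos.mono fun ω hω ↦ sub_nonneg.2 <|
          Hxi_antitoneOn ξ hω.1 (add_pos hω.1 hω.2) (le_add_of_nonneg_right hω.2.le)) (by fun_prop)
    _ = (∫⁻ t, ENNReal.ofReal (t ^ (-ξ - 1)) * P {ω | E1 ω < t ∧ t < E1 ω + E2 ω}).toReal := by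
        rw [lintegral_congr_ae hlayer,
          lintegral_setLIntegral_Ioo_eq_lintegral_mul P volume (Y := fun ω ↦ E1 ω + E2 ω) hm1
            (hm1.add hm2) (by fun_prop)]
    _ = Gamma (1 - ξ) := by
        simp_rw [hprob]
        rw [lintegral_ofReal_rpow_mul_ofReal_mul_exp_neg (by linarith), ENNReal.toReal_ofReal
          (Gamma_pos_of_pos (by linarith)).le]
        congr 1; ring
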